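/- Let n ≥ 1, let p be a distribution of (X^n, Y^n, M) with X^n, Y^n valued in finite sets 𝒳^n, 𝒴^n, and let q be a distribution on 𝒳 × 𝒴 with ‖p_{X^n,Y^n} − q^{(n)}‖_TV ≤ ε ≤ 1/4. Then H(M) ≥ Σ_{i=1}^n [ I(X_i, Y_i; M, X^{i-1}, Y^{i-1}) ] − n·ε', where ε' = 2(2ε log(|𝒳||𝒴|) + h(2ε)) depends only on ε, |𝒳|, |𝒴| and satisfies ε' → 0 as ε → 0. -/

import Mathlib

open scoped BigOperators

/-- A probability mass function on a finite sample space. -/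
structure FinPMF (Ω : Type*) [Fintype Ω] where
  p : Ω → ℝ
  nonneg : ∀ ω, 0 ≤ p ω
  sum_one : ∑ ω, p ω = 1

namespace FinPMF

variable {Ω : Type*} [Fintype Ω]

/-- Probability that the random variable `X` takes the value `a`. -/
def pr (μ : FinPMF Ω) {A : Type*} [DecidableEq A] (X : Ω → A) (a : A) : ℝ :=
  ∑ ω, if X ω = a then μ.p ω else 0

/-- Shannon entropy (base 2, i.e. in bits) of the random variable `X`. -/
noncomputable def H (μ : FinPMF Ω) {A : Type*} [Fintype A] [DecidableEq A]
    (X : Ω → A) : ℝ :=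
  -∑ a, μ.pr X a * Real.logb 2 (μ.pr X a)

/-- Conditional entropy `H(X|Z)`. -/
noncomputable def CondH (μ : FinPMF Ω) {A C : Type*} [Fintype A] [DecidableEq A]
    [Fintype C] [DecidableEq C] (X : Ω → A) (Z : Ω → C) : ℝ :=
  μ.H (fun ω => (X ω, Z ω)) - μ.H Z

/-- Mutual information `I(X;Y)`. -/
noncomputable def I2 (μ : FinPMF Ω) {A B : Type*} [Fintype A] [DecidableEq A]
    [Fintype B] [DecidableEq B] (X : Ω → A) (Y : Ω → B) : ℝ :=
  μ.H X + μ.H Y - μ.H (fun ω => (X ω, Y ω))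

/-- Conditional mutual information `I(X;Y|Z)`. -/
noncomputable def CI (μ : FinPMF Ω) {A B C : Type*} [Fintype A] [DecidableEq A]
    [Fintype B] [DecidableEq B] [Fintype C] [DecidableEq C]
    (X : Ω → A) (Y : Ω → B) (Z : Ω → C) : ℝ :=
  μ.H (fun ω => (X ω, Z ω)) + μ.H (fun ω => (Y ω, Z ω))
    - μ.H (fun ω => (X ω, Y ω, Z ω)) - μ.H Z

/-- `X` and `Y` are independent. -/
def Indep (μ : FinPMF Ω) {A B : Type*} [DecidableEq A] [DecidableEq B]
    (X : Ω → A) (Y : Ω → B) : Prop :=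
  ∀ a b, μ.pr (fun ω => (X ω, Y ω)) (a, b) = μ.pr X a * μ.pr Y b

/-- `X` and `Y` are conditionally independent given `Z` (Markov chain `X − Z − Y`). -/
def CondIndep (μ : FinPMF Ω) {A B C : Type*} [DecidableEq A] [DecidableEq B]
    [DecidableEq C] (X : Ω → A) (Y : Ω → B) (Z : Ω → C) : Prop :=
  ∀ a b c, μ.pr (fun ω => (X ω, Y ω, Z ω)) (a, b, c) * μ.pr Z c
    = μ.pr (fun ω => (X ω, Z ω)) (a, c) * μ.pr (fun ω => (Y ω, Z ω)) (b, c)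

end FinPMF

/-- Binary entropy function (base 2). -/
noncomputable def binEnt (t : ℝ) : ℝ :=
  -(t * Real.logb 2 t) - (1 - t) * Real.logb 2 (1 - t)

/-!
Writing `I(Xᵢ,Yᵢ; M,X^{i-1},Y^{i-1}) = H(Xᵢ,Yᵢ) - H(Xᵢ,Yᵢ | M,X^{i-1},Y^{i-1})`, the chain rule
sums the conditional entropies to `H(M,X^n,Y^n) - H(M) ≥ H(X^n,Y^n) - H(M)`. Entropy is continuous
in total variation, `|H(p) - H(r)| ≤ δ log|A| + h(δ)` whenever `TV(p, r) ≤ δ ≤ 1/2`; this compares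
each `H(Xᵢ,Yᵢ)` with `H(q)` (taking a marginal does not increase total variation) and `H(X^n,Y^n)`
with `H(q^{(n)}) = n H(q)`.
-/

open Real Finset

theorem negMulLog_add_le {x y : ℝ} (hx : 0 ≤ x) (hy : 0 ≤ y) :
    negMulLog (x + y) ≤ negMulLog x + negMulLog y := by
  have key : ∀ {a b : ℝ}, 0 ≤ a → 0 ≤ b → -a * log (a + b) ≤ negMulLog a := fun {a b} ha hb => by
    rcases ha.eq_or_lt with rfl | ha
    · simp
    · have := log_le_log ha (le_add_of_nonneg_right hb)
      rw [negMulLog]; nlinarith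
  have hx' := key hx hy
  have hy' := key hy hx
  rw [add_comm y x] at hy'
  rw [negMulLog]; linarith

/-- Concavity of `negMulLog` at `x / c` and `y / (1 - c)`, with weights `c` and `1 - c`. -/
theorem negMulLog_add_mul_log_le {x y c : ℝ} (hx : 0 ≤ x) (hy : 0 ≤ y) (hc : 0 < c)
    (hyc : y ≤ 1 - c) : negMulLog x + x * log c ≤ negMulLog (x + y) := by
  have hscale : c * negMulLog (x / c) = negMulLog x + x * log c := by
    rw [div_eq_mul_inv, negMulLog_mul, negMulLog, negMulLog, log_inv]
    field_simp
  have hrest : 0 ≤ (1 - c) * negMulLog (y / (1 - c)) :=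
    mul_nonneg (by linarith)
      (negMulLog_nonneg (div_nonneg hy (by linarith)) (div_le_one_of_le₀ hyc (by linarith)))
  have hconc := concaveOn_negMulLog.2 (Set.mem_Ici.2 (div_nonneg hx hc.le))
    (Set.mem_Ici.2 (div_nonneg hy (by linarith : (0 : ℝ) ≤ 1 - c)))
    hc.le (by linarith : (0 : ℝ) ≤ 1 - c) (add_sub_cancel c 1)
  rw [smul_eq_mul, smul_eq_mul, smul_eq_mul, smul_eq_mul, mul_div_cancel₀ x hc.ne',
    mul_div_cancel_of_imp' fun h => by linarith] at hconc
  linarith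

theorem sum_negMulLog_le {A : Type*} [Fintype A] {u : A → ℝ} (hu : ∀ a, 0 ≤ u a) :
    ∑ a, negMulLog (u a) ≤ (∑ a, u a) * log (Fintype.card A) + negMulLog (∑ a, u a) := by
  rcases isEmpty_or_nonempty A with hA | hA
  · simp
  have hcard : (0 : ℝ) < Fintype.card A := by exact_mod_cast Fintype.card_pos
  have jensen := concaveOn_negMulLog.le_map_sum (t := univ) (w := fun _ => (Fintype.card A : ℝ)⁻¹)
    (p := u) (fun _ _ => by positivity) (by simp [hcard.ne']) (fun a _ => Set.mem_Ici.2 (hu a))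
  simp only [smul_eq_mul, ← mul_sum] at jensen
  rw [mul_comm, negMulLog_mul, negMulLog, log_inv] at jensen
  have := mul_le_mul_of_nonneg_left jensen hcard.le
  field_simp at this
  linarith

section Continuity

variable {A : Type*} [Fintype A]

/-- Split `p = m + u`, `r = m + v` with `m = min p r` and `∑ u = ∑ v = s = TV(p, r)`: subadditivity
bounds `∑ negMulLog p` above by `∑ negMulLog m + ∑ negMulLog u`, concavity bounds `∑ negMulLog r`
below by `∑ negMulLog m - negMulLog (1 - s)`, and Jensen bounds `∑ negMulLog u`. -/
theorem sum_negMulLog_sub_le_of_tv {p r : A → ℝ} (hp0 : ∀ a, 0 ≤ p a) (hr0 : ∀ a, 0 ≤ r a)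
    (hp1 : ∑ a, p a = 1) (hr1 : ∑ a, r a = 1) {δ : ℝ}
    (hTV : (1 / 2 : ℝ) * ∑ a, |p a - r a| ≤ δ) (hδ : δ ≤ 1 / 2) :
    ∑ a, negMulLog (p a) - ∑ a, negMulLog (r a)
      ≤ δ * log (Fintype.card A) + binEntropy δ := by
  set m : A → ℝ := fun a => min (p a) (r a)
  set s : ℝ := 1 - ∑ a, m a with hs_def
  have hm0 : ∀ a, 0 ≤ m a := fun a => le_min (hp0 a) (hr0 a)
  have hu0 : ∀ a, 0 ≤ p a - m a := fun a => sub_nonneg.2 (min_le_left _ _)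
  have hv0 : ∀ a, 0 ≤ r a - m a := fun a => sub_nonneg.2 (min_le_right _ _)
  have hsu : ∑ a, (p a - m a) = s := by rw [sum_sub_distrib, hp1]
  have hsv : ∑ a, (r a - m a) = s := by rw [sum_sub_distrib, hr1]
  have hs0 : 0 ≤ s := hsu ▸ sum_nonneg fun a _ => hu0 a
  have hsδ : s ≤ δ := by
    have habs : ∀ a, |p a - r a| = (p a - m a) + (r a - m a) := fun a => by
      rw [← max_sub_min_eq_abs']; linarith [min_add_max (p a) (r a)]
    rw [sum_congr rfl fun a _ => habs a, sum_add_distrib, hsu, hsv] at hTV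
    linarith
  have upper : ∑ a, negMulLog (p a) ≤ ∑ a, negMulLog (m a) + ∑ a, negMulLog (p a - m a) := by
    rw [← sum_add_distrib]
    gcongr with a
    simpa using negMulLog_add_le (hm0 a) (hu0 a)
  have lower : ∑ a, negMulLog (m a) + (1 - s) * log (1 - s) ≤ ∑ a, negMulLog (r a) :=
    calc ∑ a, negMulLog (m a) + (1 - s) * log (1 - s)
        = ∑ a, (negMulLog (m a) + m a * log (1 - s)) := by
          rw [sum_add_distrib, ← sum_mul, hs_def, sub_sub_cancel]
      _ ≤ ∑ a, negMulLog (m a + (r a - m a)) := by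
          gcongr with a
          refine negMulLog_add_mul_log_le (hm0 a) (hv0 a) (by linarith) ?_
          rw [sub_sub_cancel, ← hsv]
          exact single_le_sum (fun b _ => hv0 b) (mem_univ a)
      _ = ∑ a, negMulLog (r a) := by simp
  have jensen := sum_negMulLog_le hu0
  rw [hsu] at jensen
  have mono : s * log (Fintype.card A) + binEntropy s ≤ δ * log (Fintype.card A) + binEntropy δ :=
    add_le_add (mul_le_mul_of_nonneg_right hsδ (log_natCast_nonneg _))
      (binEntropy_strictMonoOn.monotoneOn ⟨hs0, by linarith⟩ ⟨hs0.trans hsδ, by linarith⟩ hsδ)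
  have hneg : negMulLog (1 - s) = -((1 - s) * log (1 - s)) := neg_mul _ _
  rw [binEntropy_eq_negMulLog_add_negMulLog_one_sub, hneg] at mono
  linarith

end Continuity

section Entropy

variable {A B : Type*} [Fintype A] [Fintype B]

noncomputable def entropy (p : A → ℝ) : ℝ := -∑ a, p a * logb 2 (p a)

def pushforward [DecidableEq B] (f : A → B) (p : A → ℝ) (b : B) : ℝ := ∑ a with f a = b, p a

theorem entropy_eq_sum_negMulLog_div (p : A → ℝ) :
    entropy p = (∑ a, negMulLog (p a)) / log 2 := by
  rw [entropy, ← sum_neg_distrib, sum_div]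
  refine sum_congr rfl fun a _ => ?_
  rw [logb, negMulLog]
  ring

theorem binEnt_eq_binEntropy_div (t : ℝ) : binEnt t = binEntropy t / log 2 := by
  rw [binEnt, binEntropy_eq_negMulLog_add_negMulLog_one_sub, logb, logb, negMulLog, negMulLog]
  ring

theorem binEnt_nonneg {t : ℝ} (h0 : 0 ≤ t) (h1 : t ≤ 1) : 0 ≤ binEnt t := by
  rw [binEnt_eq_binEntropy_div]
  exact div_nonneg (binEntropy_nonneg h0 h1) (log_nonneg one_le_two)

theorem abs_entropy_sub_le_of_tv {p r : A → ℝ} (hp0 : ∀ a, 0 ≤ p a) (hr0 : ∀ a, 0 ≤ r a)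
    (hp1 : ∑ a, p a = 1) (hr1 : ∑ a, r a = 1) {δ : ℝ}
    (hTV : (1 / 2 : ℝ) * ∑ a, |p a - r a| ≤ δ) (hδ : δ ≤ 1 / 2) :
    |entropy p - entropy r| ≤ δ * logb 2 (Fintype.card A) + binEnt δ := by
  have hbits : ∀ {p r : A → ℝ}, (∀ a, 0 ≤ p a) → (∀ a, 0 ≤ r a) → ∑ a, p a = 1 → ∑ a, r a = 1 →
      (1 / 2 : ℝ) * ∑ a, |p a - r a| ≤ δ →
      entropy p - entropy r ≤ δ * logb 2 (Fintype.card A) + binEnt δ := by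
    intro p r hp0 hr0 hp1 hr1 hTV
    rw [entropy_eq_sum_negMulLog_div, entropy_eq_sum_negMulLog_div, binEnt_eq_binEntropy_div,
      logb, ← sub_div, mul_div_assoc', ← add_div]
    exact div_le_div_of_nonneg_right (sum_negMulLog_sub_le_of_tv hp0 hr0 hp1 hr1 hTV hδ)
      (log_nonneg one_le_two)
  refine abs_sub_le_iff.2 ⟨hbits hp0 hr0 hp1 hr1 hTV, hbits hr0 hp0 hr1 hp1 ?_⟩
  simpa only [abs_sub_comm] using hTV

theorem entropy_pushforward_le [DecidableEq B] {p : A → ℝ} (hp : ∀ a, 0 ≤ p a) (f : A → B) :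
    entropy (pushforward f p) ≤ entropy p := by
  rw [entropy_eq_sum_negMulLog_div, entropy_eq_sum_negMulLog_div]
  refine div_le_div_of_nonneg_right ?_ (log_nonneg one_le_two)
  calc ∑ b, negMulLog (pushforward f p b)
      ≤ ∑ b, ∑ a with f a = b, negMulLog (p a) := by
        gcongr with b
        exact le_sum_of_subadditive_on_pred negMulLog (0 ≤ ·) (by simp)
          (fun x y hx hy => negMulLog_add_le hx hy) (fun x y hx hy => add_nonneg hx hy) p
          (fun a _ => hp a)
    _ = ∑ a, negMulLog (p a) := sum_fiberwise _ _ _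

theorem sum_abs_pushforward_sub_le [DecidableEq B] (f : A → B) (p r : A → ℝ) :
    ∑ b, |pushforward f p b - pushforward f r b| ≤ ∑ a, |p a - r a| :=
  calc ∑ b, |pushforward f p b - pushforward f r b|
      ≤ ∑ b, ∑ a with f a = b, |p a - r a| := by
        gcongr with b
        rw [pushforward, pushforward, ← sum_sub_distrib]
        exact abs_sum_le_sum_abs _ _
    _ = ∑ a, |p a - r a| := sum_fiberwise _ _ _

end Entropy

section ProductDistribution

variable {A : Type*} [Fintype A] {q : A → ℝ}

theorem sum_prod_apply (hq1 : ∑ a, q a = 1) (n : ℕ) : ∑ h : Fin n → A, ∏ i, q (h i) = 1 := by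
  rw [← Fintype.sum_pow, hq1, one_pow]

theorem sum_prod_apply_mul (hq1 : ∑ a, q a = 1) {n : ℕ} (i : Fin n) (φ : A → ℝ) :
    ∑ h : Fin n → A, (∏ j, q (h j)) * φ (h i) = ∑ a, q a * φ a := by
  have hfactor : ∀ h : Fin n → A,
      (∏ j, q (h j)) * φ (h i) = ∏ j, q (h j) * (if j = i then φ (h j) else 1) := fun h => by
    rw [prod_mul_distrib, prod_ite_eq' univ i, if_pos (mem_univ i)]
  calc ∑ h : Fin n → A, (∏ j, q (h j)) * φ (h i)
      = ∏ j, ∑ a, q a * (if j = i then φ a else 1) := by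
        rw [Fintype.prod_sum]; exact sum_congr rfl fun h _ => hfactor h
    _ = ∏ j, if j = i then ∑ a, q a * φ a else 1 := by
        congr! 1 with j; split_ifs <;> simp [hq1]
    _ = ∑ a, q a * φ a := by simp

theorem pushforward_eval_prod [DecidableEq A] (hq1 : ∑ a, q a = 1) {n : ℕ} (i : Fin n) :
    pushforward (fun h : Fin n → A => h i) (fun h => ∏ j, q (h j)) = q := by
  funext a
  rw [pushforward, sum_filter]
  simpa [mul_ite] using sum_prod_apply_mul hq1 i (fun b => if b = a then 1 else 0)

theorem entropy_prod (hq1 : ∑ a, q a = 1) (n : ℕ) :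
    entropy (fun h : Fin n → A => ∏ i, q (h i)) = n * entropy q := by
  have hterm : ∀ h : Fin n → A, (∏ i, q (h i)) * logb 2 (∏ i, q (h i))
      = ∑ i, (∏ j, q (h j)) * logb 2 (q (h i)) := fun h => by
    by_cases h0 : ∏ i, q (h i) = 0
    · simp [h0]
    · rw [logb_prod _ _ fun i _ => by contrapose! h0; exact prod_eq_zero (mem_univ i) h0,
        mul_sum]
  rw [entropy, entropy, sum_congr rfl fun h _ => hterm h, sum_comm]
  rw [sum_congr rfl fun i _ => sum_prod_apply_mul hq1 i fun a => logb 2 (q a)]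
  simp

end ProductDistribution

theorem Fin.sum_succ_sub_castSucc {G : Type*} [AddCommGroup G] {n : ℕ} (f : Fin (n + 1) → G) :
    ∑ i : Fin n, (f i.succ - f i.castSucc) = f (Fin.last n) - f 0 := by
  induction n with
  | zero => simp
  | succ n ih =>
    rw [Fin.sum_univ_castSucc]
    simp only [Fin.succ_castSucc]
    rw [ih fun i => f i.castSucc, Fin.succ_last, Fin.castSucc_zero]
    abel

namespace FinPMF

variable {Ω : Type*} [Fintype Ω] (μ : FinPMF Ω)

theorem pr_nonneg {A : Type*} [DecidableEq A] (X : Ω → A) (a : A) : 0 ≤ μ.pr X a :=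
  sum_nonneg fun ω _ => by split_ifs <;> simp [μ.nonneg ω]

theorem sum_pr {A : Type*} [Fintype A] [DecidableEq A] (X : Ω → A) : ∑ a, μ.pr X a = 1 := by
  unfold pr
  rw [sum_comm, ← μ.sum_one]
  simp

theorem pr_comp {A B : Type*} [Fintype A] [DecidableEq A] [Fintype B] [DecidableEq B]
    (X : Ω → A) (f : A → B) : μ.pr (fun ω => f (X ω)) = pushforward f (μ.pr X) := by
  funext b
  unfold pr pushforward
  rw [sum_comm]
  simp [sum_ite_eq]

theorem pr_comp_apply_of_injective {A B : Type*} [DecidableEq A] [DecidableEq B] (X : Ω → A)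
    {f : A → B} (hf : Function.Injective f) (a : A) :
    μ.pr (fun ω => f (X ω)) (f a) = μ.pr X a := by
  simp only [pr, hf.eq_iff]

theorem H_comp_le {A B : Type*} [Fintype A] [DecidableEq A] [Fintype B] [DecidableEq B]
    (X : Ω → A) (f : A → B) : μ.H (fun ω => f (X ω)) ≤ μ.H X := by
  rw [H, pr_comp]
  exact entropy_pushforward_le (μ.pr_nonneg X) f

theorem H_eq_of_comp {A B : Type*} [Fintype A] [DecidableEq A] [Fintype B] [DecidableEq B]
    {X : Ω → A} {Y : Ω → B} (f : A → B) (g : B → A) (hf : ∀ ω, Y ω = f (X ω))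
    (hg : ∀ ω, X ω = g (Y ω)) : μ.H Y = μ.H X := by
  obtain rfl : Y = fun ω => f (X ω) := funext hf
  refine le_antisymm (μ.H_comp_le X f) ?_
  calc μ.H X = μ.H (fun ω => g (f (X ω))) := congrArg μ.H (funext hg)
    _ ≤ μ.H (fun ω => f (X ω)) := μ.H_comp_le _ g

theorem I2_eq_H_sub_condH {A B : Type*} [Fintype A] [DecidableEq A] [Fintype B] [DecidableEq B]
    (X : Ω → A) (Y : Ω → B) : μ.I2 X Y = μ.H X - μ.CondH X Y := by
  rw [I2, CondH]
  ring

theorem sum_abs_pr_pair_sub_prod_eq {𝒳 𝒴 : Type*} [Fintype 𝒳] [DecidableEq 𝒳] [Fintype 𝒴]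
    [DecidableEq 𝒴] {n : ℕ} (X : Ω → Fin n → 𝒳) (Y : Ω → Fin n → 𝒴) (q : 𝒳 × 𝒴 → ℝ) :
    ∑ z : (Fin n → 𝒳) × (Fin n → 𝒴), |μ.pr (fun ω => (X ω, Y ω)) z - ∏ i, q (z.1 i, z.2 i)|
      = ∑ h : Fin n → 𝒳 × 𝒴, |μ.pr (fun ω i => (X ω i, Y ω i)) h - ∏ i, q (h i)| := by
  set e := Equiv.arrowProdEquivProdArrow (Fin n) (fun _ => 𝒳) (fun _ => 𝒴)
  rw [← e.sum_comp]
  refine sum_congr rfl fun h _ => ?_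
  rw [← μ.pr_comp_apply_of_injective _ e.injective h]
  rfl

theorem H_apply_le_entropy_add_of_tv {A : Type*} [Fintype A] [DecidableEq A] {n : ℕ}
    {U : Ω → Fin n → A} {q : A → ℝ} (hq0 : ∀ a, 0 ≤ q a) (hq1 : ∑ a, q a = 1) {δ : ℝ}
    (hTV : (1 / 2 : ℝ) * ∑ h, |μ.pr U h - ∏ i, q (h i)| ≤ δ) (hδ : δ ≤ 1 / 2) (i : Fin n) :
    μ.H (fun ω => U ω i) ≤ entropy q + (δ * logb 2 (Fintype.card A) + binEnt δ) := by
  have hTVi : (1 / 2 : ℝ) * ∑ a, |μ.pr (fun ω => U ω i) a - q a| ≤ δ := by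
    have := sum_abs_pushforward_sub_le (fun h : Fin n → A => h i) (μ.pr U) fun h => ∏ j, q (h j)
    rw [← μ.pr_comp, pushforward_eval_prod hq1] at this
    linarith
  exact sub_le_iff_le_add'.1 <| le_of_abs_le <|
    abs_entropy_sub_le_of_tv (μ.pr_nonneg _) hq0 (μ.sum_pr _) hq1 hTVi hδ

theorem abs_H_sub_mul_entropy_le_of_tv {A : Type*} [Fintype A] [DecidableEq A] {n : ℕ}
    {U : Ω → Fin n → A} {q : A → ℝ} (hq0 : ∀ a, 0 ≤ q a) (hq1 : ∑ a, q a = 1) {δ : ℝ}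
    (hTV : (1 / 2 : ℝ) * ∑ h, |μ.pr U h - ∏ i, q (h i)| ≤ δ) (hδ : δ ≤ 1 / 2) :
    |μ.H U - n * entropy q| ≤ δ * (n * logb 2 (Fintype.card A)) + binEnt δ := by
  have := abs_entropy_sub_le_of_tv (μ.pr_nonneg U) (fun h => prod_nonneg fun i _ => hq0 (h i))
    (μ.sum_pr U) (sum_prod_apply hq1 n) hTV hδ
  rwa [entropy_prod hq1, Fintype.card_fun, Fintype.card_fin, Nat.cast_pow, logb_pow] at this

theorem condH_chain_rule {𝓜 𝒳 𝒴 : Type*} [Fintype 𝓜] [DecidableEq 𝓜]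
    [Fintype 𝒳] [DecidableEq 𝒳] [Fintype 𝒴] [DecidableEq 𝒴] {n : ℕ}
    (M : Ω → 𝓜) (Xn : Ω → Fin n → 𝒳) (Yn : Ω → Fin n → 𝒴) :
    ∑ i : Fin n, μ.CondH (fun ω => (Xn ω i, Yn ω i))
        (fun ω => (M ω, Fin.take i i.isLt.le (Xn ω), Fin.take i i.isLt.le (Yn ω)))
      = μ.H (fun ω => (M ω, Xn ω, Yn ω)) - μ.H M := by
  set T : Fin (n + 1) → ℝ := fun k =>
    μ.H (fun ω => (M ω, Fin.take k k.is_le (Xn ω), Fin.take k k.is_le (Yn ω)))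
  have hsucc : ∀ i : Fin n, T i.succ = μ.H (fun ω => ((Xn ω i, Yn ω i),
      (M ω, Fin.take i i.isLt.le (Xn ω), Fin.take i i.isLt.le (Yn ω)))) := fun i =>
    μ.H_eq_of_comp (fun s => (s.2.1, Fin.snoc s.2.2.1 s.1.1, Fin.snoc s.2.2.2 s.1.2))
      (fun t => ((t.2.1 (Fin.last i), t.2.2 (Fin.last i)), (t.1, Fin.init t.2.1, Fin.init t.2.2)))
      (fun ω => Prod.ext rfl (Prod.ext (Fin.take_succ_eq_snoc _ i.isLt _)
        (Fin.take_succ_eq_snoc _ i.isLt _)))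
      (fun ω => rfl)
  have hzero : T 0 = μ.H M :=
    μ.H_eq_of_comp (fun m => (m, Fin.elim0, Fin.elim0)) Prod.fst
      (fun ω => Prod.ext rfl (Prod.ext (funext fun j => j.elim0) (funext fun j => j.elim0)))
      (fun ω => rfl)
  have hlast : T (Fin.last n) = μ.H (fun ω => (M ω, Xn ω, Yn ω)) := by
    simp only [T, Fin.val_last, Fin.take_eq_self]
  unfold CondH
  simp_rw [← hsucc]
  rw [← hzero, ← hlast]
  exact Fin.sum_succ_sub_castSucc T

end FinPMF

/-- If `‖p_{X^n,Y^n} − q^{(n)}‖_TV ≤ ε ≤ 1/4`, then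
`H(M) ≥ ∑ᵢ I(Xᵢ,Yᵢ; M, X^{i-1}, Y^{i-1}) − n ε'` with
`ε' = 2(2ε log₂(|𝒳||𝒴|) + h(2ε))`. -/
theorem stmt14 {Ω 𝒳 𝒴 𝓜 : Type*} [Fintype Ω]
    [Fintype 𝒳] [DecidableEq 𝒳] [Fintype 𝒴] [DecidableEq 𝒴]
    [Fintype 𝓜] [DecidableEq 𝓜] {n : ℕ} (hn : 1 ≤ n)
    (μ : FinPMF Ω) (Xn : Ω → Fin n → 𝒳) (Yn : Ω → Fin n → 𝒴) (M : Ω → 𝓜)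
    (q : 𝒳 × 𝒴 → ℝ) (hq0 : ∀ z, 0 ≤ q z) (hq1 : ∑ z, q z = 1)
    (ε : ℝ) (hε0 : 0 ≤ ε) (hε4 : ε ≤ 1 / 4)
    (hTV : (1 / 2 : ℝ) * ∑ z : (Fin n → 𝒳) × (Fin n → 𝒴),
        |μ.pr (fun ω => (Xn ω, Yn ω)) z - ∏ i, q (z.1 i, z.2 i)| ≤ ε) :
    (∑ i : Fin n,
        μ.I2 (fun ω => (Xn ω i, Yn ω i))
          (fun ω => (M ω,
            fun j : Fin i.val => Xn ω (Fin.castLE i.isLt.le j),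
            fun j : Fin i.val => Yn ω (Fin.castLE i.isLt.le j))))
      - (n : ℝ) * (2 * (2 * ε * Real.logb 2 ((Fintype.card 𝒳 : ℝ) * (Fintype.card 𝒴 : ℝ))
            + binEnt (2 * ε)))
      ≤ μ.H M := by
  set U : Ω → Fin n → 𝒳 × 𝒴 := fun ω i => (Xn ω i, Yn ω i)
  have hTVU : (1 / 2 : ℝ) * ∑ h, |μ.pr U h - ∏ i, q (h i)| ≤ 2 * ε := by
    rw [← μ.sum_abs_pr_pair_sub_prod_eq]
    linarith
  have hcard : (Fintype.card (𝒳 × 𝒴) : ℝ) = Fintype.card 𝒳 * Fintype.card 𝒴 := by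
    rw [Fintype.card_prod, Nat.cast_mul]
  have hmarg := μ.H_apply_le_entropy_add_of_tv hq0 hq1 hTVU (by linarith)
  have hjoint := (abs_le.1 (μ.abs_H_sub_mul_entropy_le_of_tv hq0 hq1 hTVU (by linarith))).1
  rw [hcard] at hmarg hjoint
  have hsum := sum_le_sum fun i (_ : i ∈ univ) => hmarg i
  have hbin : binEnt (2 * ε) ≤ n * binEnt (2 * ε) :=
    le_mul_of_one_le_left (binEnt_nonneg (by linarith) (by linarith)) (by exact_mod_cast hn)
  have hUle : μ.H U ≤ μ.H (fun ω => (M ω, Xn ω, Yn ω)) :=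
    μ.H_comp_le (fun ω => (M ω, Xn ω, Yn ω)) fun t i => (t.2.1 i, t.2.2 i)
  simp_rw [FinPMF.I2_eq_H_sub_condH]
  rw [sum_sub_distrib]
  -- the prefixes in the statement are `Fin.take` unfolded
  erw [μ.condH_chain_rule M Xn Yn]
  simp only [sum_const, card_univ, Fintype.card_fin, nsmul_eq_mul] at hsum
  linarith
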